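/- Let X be an infinite set with the discrete topology, G the group of all permutations of X acting on OnePoint X = X ∪ {∞} (fixing ∞), and E the closure of {k ↦ g•k : g ∈ G} in (OnePoint X) → (OnePoint X) with the product topology, a monoid under composition. For each n ∈ ℕ, the set Iₙ = {f ∈ E : the set {a ∈ OnePoint X : f(a) ≠ ∞} has at most n elements} is a nonempty compact two-sided ideal of E: Iₙ is compact, and f ∘ h ∈ Iₙ and h ∘ f ∈ Iₙ for all f ∈ Iₙ and h ∈ E. -/

import Mathlib

open Set Filter Topology OnePoint

/-- The canonical action of a permutation of `X` on the one-point compactification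
`OnePoint X`, fixing the point at infinity. -/
def permOnePoint {X : Type*} (g : Equiv.Perm X) : OnePoint X → OnePoint X :=
  fun k => OnePoint.rec OnePoint.infty (fun x => ((g x : X) : OnePoint X)) k

/-- The Ellis compactification of the permutation group of a discrete space `X` from its
action on `OnePoint X`. -/
def ellisPerm (X : Type*) [TopologicalSpace X] : Set (OnePoint X → OnePoint X) :=
  closure {f : OnePoint X → OnePoint X | ∃ g : Equiv.Perm X, f = permOnePoint g}

/-- The set of elements of the Ellis compactification of the permutation group whose
"domain" `{a : f a ≠ ∞}` has at most `n` elements. -/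
def ellisPermSmall (X : Type*) [TopologicalSpace X] (n : ℕ) :
    Set (OnePoint X → OnePoint X) :=
  {f | f ∈ ellisPerm X ∧ {a : OnePoint X | f a ≠ OnePoint.infty}.Finite ∧
    {a : OnePoint X | f a ≠ OnePoint.infty}.ncard ≤ n}

section Aux

variable {X : Type*}

lemma permOnePoint_infty (g : Equiv.Perm X) : permOnePoint g (∞ : OnePoint X) = ∞ := rfl

lemma permOnePoint_coe (g : Equiv.Perm X) (x : X) :
    permOnePoint g (x : OnePoint X) = ((g x : X) : OnePoint X) := rfl

section Top

variable [TopologicalSpace X] [DiscreteTopology X]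

lemma continuous_permOnePoint (g : Equiv.Perm X) : Continuous (permOnePoint g) := by
  rw [OnePoint.continuous_iff_from_discrete]
  have h1 : Tendsto g cofinite cofinite := g.injective.tendsto_cofinite
  have h2 : Tendsto ((↑) : X → OnePoint X) cofinite (𝓝 ∞) := by
    have := OnePoint.tendsto_coe_infty (X := X)
    rwa [coclosedCompact_eq_cocompact, cocompact_eq_cofinite] at this
  exact h2.comp h1

lemma ellisPerm_isClosed : IsClosed (ellisPerm X) := isClosed_closure

lemma mem_of_closed_of_perm {C : Set (OnePoint X → OnePoint X)} (hC : IsClosed C)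
    (hperm : ∀ g : Equiv.Perm X, permOnePoint g ∈ C) {h : OnePoint X → OnePoint X}
    (hh : h ∈ ellisPerm X) : h ∈ C := by
  refine closure_minimal ?_ hC hh
  rintro f ⟨g, rfl⟩
  exact hperm g

lemma isClosed_eval_infty (a : OnePoint X) :
    IsClosed {f : OnePoint X → OnePoint X | f a = ∞} := by
  have h : {f : OnePoint X → OnePoint X | f a = ∞} =
      (fun f : OnePoint X → OnePoint X => f a) ⁻¹' {∞} := rfl
  rw [h]
  exact OnePoint.isClosed_infty.preimage (continuous_apply a)

lemma ellis_infty {h : OnePoint X → OnePoint X} (hh : h ∈ ellisPerm X) : h ∞ = ∞ :=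
  mem_of_closed_of_perm (C := {f : OnePoint X → OnePoint X | f ∞ = ∞})
    (isClosed_eval_infty ∞) (fun _ => rfl) hh

lemma isOpen_coe_singleton (x : X) : IsOpen ({(x : OnePoint X)} : Set (OnePoint X)) := by
  have := OnePoint.isOpenEmbedding_coe (X := X) |>.isOpenMap {x} (isOpen_discrete _)
  rwa [Set.image_singleton] at this

lemma ellis_inj {h : OnePoint X → OnePoint X} (hh : h ∈ ellisPerm X)
    {a b : OnePoint X} (hab : h a = h b) (hne : h a ≠ ∞) : a = b := by
  have key : h ∈ {f : OnePoint X → OnePoint X |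
      ∀ a b : OnePoint X, ∀ x : X, a ≠ b → ¬(f a = ↑x ∧ f b = ↑x)} := by
    refine mem_of_closed_of_perm ?_ ?_ hh
    · have : {f : OnePoint X → OnePoint X |
          ∀ a b : OnePoint X, ∀ x : X, a ≠ b → ¬(f a = ↑x ∧ f b = ↑x)} =
          ⋂ (a : OnePoint X) (b : OnePoint X) (x : X) (_ : a ≠ b),
            (({f : OnePoint X → OnePoint X | f a = ↑x} ∩ {f | f b = ↑x}))ᶜ := by
        ext f; simp [Set.mem_iInter, not_and]
      rw [this]
      refine isClosed_iInter fun a => isClosed_iInter fun b => isClosed_iInter fun x =>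
        isClosed_iInter fun _ => ?_
      refine IsOpen.isClosed_compl (IsOpen.inter ?_ ?_)
      · have h : {f : OnePoint X → OnePoint X | f a = ↑x} =
            (fun f : OnePoint X → OnePoint X => f a) ⁻¹' {(x : OnePoint X)} := rfl
        rw [h]; exact (isOpen_coe_singleton x).preimage (continuous_apply a)
      · have h : {f : OnePoint X → OnePoint X | f b = ↑x} =
            (fun f : OnePoint X → OnePoint X => f b) ⁻¹' {(x : OnePoint X)} := rfl
        rw [h]; exact (isOpen_coe_singleton x).preimage (continuous_apply b)
    · rintro g a b x hab ⟨ha, hb⟩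
      apply hab
      induction a using OnePoint.rec with
      | infty => exact absurd ha (by simp [permOnePoint_infty])
      | coe a' =>
        induction b using OnePoint.rec with
        | infty => exact absurd hb (by simp [permOnePoint_infty])
        | coe b' =>
          rw [permOnePoint_coe] at ha hb
          have : g a' = g b' := by
            have ha' : g a' = x := by exact_mod_cast ha
            have hb' : g b' = x := by exact_mod_cast hb
            rw [ha', hb']
          simpa using g.injective this
  by_contra hne'
  obtain ⟨x, hx⟩ := OnePoint.ne_infty_iff_exists.mp hne
  exact key a b x hne' ⟨hx.symm, hab ▸ hx.symm⟩

lemma perm_comp_mem {q : OnePoint X → OnePoint X} (g : Equiv.Perm X) (hq : q ∈ ellisPerm X) :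
    permOnePoint g ∘ q ∈ ellisPerm X := by
  have hc : Continuous (fun p : OnePoint X → OnePoint X => permOnePoint g ∘ p) :=
    continuous_pi fun a => (continuous_permOnePoint g).comp (continuous_apply a)
  have hmt : Set.MapsTo (fun p : OnePoint X → OnePoint X => permOnePoint g ∘ p)
      {f : OnePoint X → OnePoint X | ∃ g : Equiv.Perm X, f = permOnePoint g}
      {f : OnePoint X → OnePoint X | ∃ g : Equiv.Perm X, f = permOnePoint g} := by
    rintro p ⟨g', rfl⟩
    refine ⟨g'.trans g, ?_⟩
    funext k
    induction k using OnePoint.rec with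
    | infty => rfl
    | coe x => rfl
  exact map_mem_closure hc hq hmt

lemma ellis_comp {p q : OnePoint X → OnePoint X} (hp : p ∈ ellisPerm X)
    (hq : q ∈ ellisPerm X) : p ∘ q ∈ ellisPerm X := by
  have hc : Continuous (fun p : OnePoint X → OnePoint X => p ∘ q) :=
    continuous_pi fun a => continuous_apply (q a)
  have hmt : Set.MapsTo (fun p : OnePoint X → OnePoint X => p ∘ q)
      {f : OnePoint X → OnePoint X | ∃ g : Equiv.Perm X, f = permOnePoint g}
      (ellisPerm X) := by
    rintro p ⟨g, rfl⟩
    exact perm_comp_mem g hq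
  have := map_mem_closure hc hp hmt
  rwa [ellisPerm_isClosed.closure_eq] at this

lemma exists_perm_avoiding [Infinite X] (s : Finset X) (T : X → Set X)
    (hT : ∀ x, (T x)ᶜ.Finite) : ∃ g : Equiv.Perm X, ∀ x ∈ s, g x ∈ T x := by
  classical
  induction s using Finset.cons_induction_on with
  | empty => exact ⟨1, by simp⟩
  | @cons a s ha ih =>
    obtain ⟨g, hg⟩ := ih
    have hfin : ((T a)ᶜ ∪ ((s.image (g ·) : Finset X) : Set X) ∪ {g a}).Finite :=
      ((hT a).union (s.image (g ·)).finite_toSet).union (Set.finite_singleton _)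
    obtain ⟨b, hb⟩ := hfin.infinite_compl.nonempty
    simp only [Set.mem_compl_iff, Set.mem_union, not_or, Set.mem_singleton_iff] at hb
    obtain ⟨⟨hbT, hbim⟩, hbga⟩ := hb
    refine ⟨Equiv.swap (g a) b * g, ?_⟩
    intro x hx
    rcases Finset.mem_cons.mp hx with rfl | hxs
    · have hh : (Equiv.swap (g x) b * g) x = b := by
        simp [Equiv.Perm.mul_apply, Equiv.swap_apply_left]
      rw [hh]
      simpa using hbT
    · have h1 : g x ≠ g a := fun h => ha ((g.injective h) ▸ hxs)
      have h2 : g x ≠ b := by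
        intro h
        exact hbim (by simp only [Finset.coe_image, Set.mem_image, Finset.mem_coe]; exact ⟨x, hxs, h⟩)
      have : (Equiv.swap (g a) b * g) x = g x := by
        simp [Equiv.Perm.mul_apply, Equiv.swap_apply_of_ne_of_ne h1 h2]
      rw [this]
      exact hg x hxs

lemma finite_compl_of_nhds_infty {V : Set (OnePoint X)} (hV : V ∈ 𝓝 (∞ : OnePoint X)) :
    {x : X | (x : OnePoint X) ∉ V}.Finite := by
  obtain ⟨W, hWV, hWo, hWm⟩ := mem_nhds_iff.mp hV
  have := (OnePoint.isOpen_iff_of_mem hWm).mp hWo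
  have hfin : (((↑) : X → OnePoint X) ⁻¹' W)ᶜ.Finite := this.2.finite_of_discrete
  exact hfin.subset fun x hx => fun hW => hx (hWV hW)

lemma const_infty_mem [Infinite X] :
    (fun _ : OnePoint X => (∞ : OnePoint X)) ∈ ellisPerm X := by
  rw [ellisPerm, mem_closure_iff_nhds]
  intro U hU
  rw [nhds_pi, Filter.mem_pi] at hU
  obtain ⟨I, hI, V, hV, hVU⟩ := hU
  classical
  have hIc : {x : X | (x : OnePoint X) ∈ I}.Finite :=
    (hI.preimage (OnePoint.coe_injective.injOn))
  set s : Finset X := hIc.toFinset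
  obtain ⟨g, hg⟩ := exists_perm_avoiding s (fun x => {y : X | (y : OnePoint X) ∈ V ↑x})
    (fun x => finite_compl_of_nhds_infty (hV ↑x))
  refine ⟨permOnePoint g, hVU ?_, ⟨g, rfl⟩⟩
  intro a haI
  induction a using OnePoint.rec with
  | infty => exact mem_of_mem_nhds (hV ∞)
  | coe x =>
    have hxs : x ∈ s := by simpa [s] using haI
    exact hg x hxs

lemma isClosed_small (n : ℕ) :
    IsClosed {f : OnePoint X → OnePoint X |
      {a : OnePoint X | f a ≠ ∞}.Finite ∧ {a : OnePoint X | f a ≠ ∞}.ncard ≤ n} := by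
  have heq : {f : OnePoint X → OnePoint X |
      {a : OnePoint X | f a ≠ ∞}.Finite ∧ {a : OnePoint X | f a ≠ ∞}.ncard ≤ n} =
      ⋂ (t : Set (OnePoint X)) (_ : t.Finite) (_ : n < t.ncard),
        ⋃ a ∈ t, {f : OnePoint X → OnePoint X | f a = ∞} := by
    ext f
    simp only [Set.mem_setOf_eq, Set.mem_iInter, Set.mem_iUnion, exists_prop]
    constructor
    · rintro ⟨hfin, hcard⟩ t htf htc
      by_contra hcon
      push_neg at hcon
      have hsub : t ⊆ {a : OnePoint X | f a ≠ ∞} := fun a ha => hcon a ha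
      exact absurd (le_trans (Set.ncard_le_ncard hsub hfin) hcard) (not_le.mpr htc)
    · intro hall
      have hfin : {a : OnePoint X | f a ≠ ∞}.Finite := by
        by_contra hinf
        obtain ⟨t, hts, htf, htc⟩ :=
          Set.Infinite.exists_subset_ncard_eq hinf (n + 1)
        obtain ⟨a, hat, hfa⟩ := hall t htf (by omega)
        exact (hts hat) hfa
      refine ⟨hfin, ?_⟩
      by_contra hc
      obtain ⟨a, hat, hfa⟩ := hall _ hfin (not_le.mp hc)
      exact hat hfa
  rw [heq]
  refine isClosed_iInter fun t => isClosed_iInter fun htf => isClosed_iInter fun _ => ?_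
  exact htf.isClosed_biUnion fun a _ => isClosed_eval_infty a

end Top

end Aux

/-- For every `n`, the set `Iₙ` of elements of the Ellis compactification `E` of the
permutation group of an infinite discrete space whose domain has at most `n` elements is a
nonempty compact two-sided ideal of `(E, ∘)`. -/
theorem ellisPermSmall_compact_ideal
    {X : Type*} [TopologicalSpace X] [DiscreteTopology X] [Infinite X] (n : ℕ) :
    (ellisPermSmall X n).Nonempty ∧
    IsCompact (ellisPermSmall X n) ∧
    (∀ f ∈ ellisPermSmall X n, ∀ h ∈ ellisPerm X,
      f ∘ h ∈ ellisPermSmall X n ∧ h ∘ f ∈ ellisPermSmall X n) := by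
  refine ⟨⟨fun _ => ∞, const_infty_mem, by simp, by simp⟩, ?_, ?_⟩
  · have hcl : IsClosed (ellisPermSmall X n) := by
      have : ellisPermSmall X n = ellisPerm X ∩
          {f : OnePoint X → OnePoint X |
            {a : OnePoint X | f a ≠ ∞}.Finite ∧ {a : OnePoint X | f a ≠ ∞}.ncard ≤ n} := rfl
      rw [this]
      exact ellisPerm_isClosed.inter (isClosed_small n)
    exact hcl.isCompact
  · rintro f ⟨hfE, hffin, hfcard⟩ h hhE
    constructor
    · refine ⟨ellis_comp hfE hhE, ?_, ?_⟩
      all_goals {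
        have hinj : Set.InjOn h {a : OnePoint X | f (h a) ≠ ∞} := by
          intro a ha b hb hab
          refine ellis_inj hhE hab ?_
          intro hne
          exact ha (by simp [hne, ellis_infty hfE])
        have hsub : h '' {a : OnePoint X | f (h a) ≠ ∞} ⊆ {a : OnePoint X | f a ≠ ∞} := by
          rintro _ ⟨a, ha, rfl⟩
          exact ha
        have hfin : {a : OnePoint X | f (h a) ≠ ∞}.Finite :=
          Set.Finite.of_finite_image (hffin.subset hsub) hinj
        have hcard : {a : OnePoint X | f (h a) ≠ ∞}.ncard ≤ n := by
          calc {a : OnePoint X | f (h a) ≠ ∞}.ncard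
              = (h '' {a : OnePoint X | f (h a) ≠ ∞}).ncard := (Set.ncard_image_of_injOn hinj).symm
            _ ≤ {a : OnePoint X | f a ≠ ∞}.ncard := Set.ncard_le_ncard hsub hffin
            _ ≤ n := hfcard
        first
        | exact hfin
        | exact hcard
      }
    · have hsub : {a : OnePoint X | h (f a) ≠ ∞} ⊆ {a : OnePoint X | f a ≠ ∞} := by
        intro a ha hfa
        exact ha (by simp [hfa, ellis_infty hhE])
      exact ⟨ellis_comp hhE hfE, hffin.subset hsub,
        le_trans (Set.ncard_le_ncard hsub hffin) hfcard⟩
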